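/- arXiv:2501.16233 — 6 statements merged into one kernel-verified Lean document; each statement's English description precedes it below -/
import Mathlib

section
/- For vertex-disjoint finite graphs Γ₁ and Γ₂, the boxicity of their join satisfies box(Γ₁ ∨ Γ₂) = box(Γ₁) + box(Γ₂). -/
/-- An interval graph: adjacency given by intersection of closed real intervals. -/
def IsIntervalGraph {V : Type*} (I : SimpleGraph V) : Prop :=
  ∃ a b : V → ℝ, ∀ u v : V,
    I.Adj u v ↔ u ≠ v ∧ (Set.Icc (a u) (b u) ∩ Set.Icc (a v) (b v)).Nonempty

/-- A unit interval graph: adjacency given by intersection of closed unit intervals. -/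
def IsUnitIntervalGraph {V : Type*} (I : SimpleGraph V) : Prop :=
  ∃ a : V → ℝ, ∀ u v : V,
    I.Adj u v ↔ u ≠ v ∧ (Set.Icc (a u) (a u + 1) ∩ Set.Icc (a v) (a v + 1)).Nonempty

/-- Boxicity: least `k` such that `G` is the intersection of `k` interval graphs. -/
noncomputable def boxicity {V : Type*} (G : SimpleGraph V) : ℕ :=
  sInf {k | ∃ I : Fin k → SimpleGraph V, (∀ i, IsIntervalGraph (I i)) ∧
    ∀ u v, G.Adj u v ↔ (u ≠ v ∧ ∀ i, (I i).Adj u v)}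

/-- Cubicity: least `k` such that `G` is the intersection of `k` unit interval graphs. -/
noncomputable def cubicity {V : Type*} (G : SimpleGraph V) : ℕ :=
  sInf {k | ∃ I : Fin k → SimpleGraph V, (∀ i, IsUnitIntervalGraph (I i)) ∧
    ∀ u v, G.Adj u v ↔ (u ≠ v ∧ ∀ i, (I i).Adj u v)}

/-- Transitive closure of the Cartesian product of complete graphs `K_{m i + 1}`. -/
def TCC {d : ℕ} (m : Fin d → ℕ) : SimpleGraph (∀ i, Fin (m i + 1)) where
  Adj x y := x ≠ y ∧ ((∀ i, (x i : ℕ) ≤ y i) ∨ (∀ i, (y i : ℕ) ≤ x i))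
  symm := ⟨fun _ _ h => ⟨h.1.symm, h.2.symm⟩⟩
  loopless := ⟨fun _ h => h.1 rfl⟩

/-- Transitive closure of the `s`-dimensional hypercube. -/
def TCH (s : ℕ) : SimpleGraph (∀ _ : Fin s, Fin 2) := TCC (fun _ => 1)

/-- Join of two vertex-disjoint graphs, on the sum of their vertex types. -/
def graphJoin {V₁ V₂ : Type*} (G₁ : SimpleGraph V₁) (G₂ : SimpleGraph V₂) :
    SimpleGraph (V₁ ⊕ V₂) where
  Adj x y :=
    match x, y with
    | Sum.inl a, Sum.inl b => G₁.Adj a b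
    | Sum.inr a, Sum.inr b => G₂.Adj a b
    | Sum.inl _, Sum.inr _ => True
    | Sum.inr _, Sum.inl _ => True
  symm := by constructor; rintro (a | a) (b | b) h <;> simp_all <;> exact h.symm
  loopless := by constructor; rintro (a | a) h <;> simp_all

section Helpers

open SimpleGraph

lemma icc_nonempty_iff (a b c d : ℝ) :
    (Set.Icc a b ∩ Set.Icc c d).Nonempty ↔ max a c ≤ min b d := by
  rw [Set.Icc_inter_Icc, Set.nonempty_Icc]

/-- The interval graph determined by interval endpoint functions. -/
def intervalGraphOf {V : Type*} (a b : V → ℝ) : SimpleGraph V where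
  Adj u v := u ≠ v ∧ max (a u) (a v) ≤ min (b u) (b v)
  symm := ⟨fun u v ⟨h1, h2⟩ => ⟨h1.symm, by rwa [max_comm, min_comm]⟩⟩
  loopless := ⟨fun u h => h.1 rfl⟩

lemma isIntervalGraph_intervalGraphOf {V : Type*} (a b : V → ℝ) :
    IsIntervalGraph (intervalGraphOf a b) :=
  ⟨a, b, fun u v => by rw [icc_nonempty_iff]; rfl⟩

lemma comap_intervalGraphOf {V W : Type*} (f : V → W) (hf : Function.Injective f)
    {I : SimpleGraph W} (h : IsIntervalGraph I) : IsIntervalGraph (I.comap f) := by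
  obtain ⟨a, b, hab⟩ := h
  exact ⟨a ∘ f, b ∘ f, fun u v => by
    rw [SimpleGraph.comap_adj, hab, hf.ne_iff]; rfl⟩

/-- Every interval graph on a finite vertex set has a representation by nonempty
intervals. -/
lemma exists_good_rep {V : Type*} [Fintype V] {I : SimpleGraph V}
    (h : IsIntervalGraph I) :
    ∃ a b : V → ℝ, (∀ u, a u ≤ b u) ∧
      ∀ u v, I.Adj u v ↔ u ≠ v ∧ max (a u) (a v) ≤ min (b u) (b v) := by
  obtain ⟨a, b, hab⟩ := h
  simp only [icc_nonempty_iff] at hab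
  set B : ℝ := ∑ u : V, (|a u| + |b u|) with hB
  have hbound : ∀ u : V, a u ≤ B ∧ b u ≤ B := by
    intro u
    have h1 : |a u| + |b u| ≤ B := by
      apply Finset.single_le_sum (f := fun u => |a u| + |b u|)
      · intro i _; positivity
      · exact Finset.mem_univ u
    constructor
    · nlinarith [le_abs_self (a u), abs_nonneg (b u)]
    · nlinarith [le_abs_self (b u), abs_nonneg (a u)]
  classical
  set e := Fintype.equivFin V with he
  set c : V → ℝ := fun u => B + 1 + (e u : ℕ) with hc
  have hcB : ∀ u, B < c u := by
    intro u
    have : (0:ℝ) ≤ ((e u : ℕ) : ℝ) := Nat.cast_nonneg _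
    simp only [hc]; linarith
  have hcinj : Function.Injective c := by
    intro u v huv
    simp only [hc] at huv
    have : ((e u : ℕ) : ℝ) = ((e v : ℕ) : ℝ) := by linarith
    exact e.injective (Fin.val_injective (Nat.cast_injective this))
  refine ⟨fun u => if a u ≤ b u then a u else c u,
          fun u => if a u ≤ b u then b u else c u, ?_, ?_⟩
  · intro u; by_cases h : a u ≤ b u <;> simp [h]
  · intro u v
    rw [hab]
    by_cases huv : u = v
    · simp [huv]
    · simp only [huv, ne_eq, not_false_iff, true_and]
      by_cases hu : a u ≤ b u
      · by_cases hv : a v ≤ b v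
        · simp only [hu, hv, if_true]
        · simp only [hu, hv, if_true, if_false]
          constructor
          · intro h
            exact absurd (le_trans (le_max_right _ _) (le_trans h (min_le_right _ _))) hv
          · intro h
            have h1 : c v ≤ b u := le_trans (le_max_right _ _) (le_trans h (min_le_left _ _))
            exact absurd (lt_of_le_of_lt h1 (lt_of_le_of_lt (hbound u).2 (hcB v))) (lt_irrefl _)
      · by_cases hv : a v ≤ b v
        · simp only [hu, hv, if_true, if_false]
          constructor
          · intro h
            exact absurd (le_trans (le_max_left _ _) (le_trans h (min_le_left _ _))) hu
          · intro h
            have h1 : c u ≤ b v := le_trans (le_max_left _ _) (le_trans h (min_le_right _ _))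
            exact absurd (lt_of_le_of_lt h1 (lt_of_le_of_lt (hbound v).2 (hcB u))) (lt_irrefl _)
        · simp only [hu, hv, if_false]
          constructor
          · intro h
            exact absurd (le_trans (le_max_left _ _) (le_trans h (min_le_left _ _))) hu
          · intro h
            have h1 : c u ≤ c v := le_trans (le_max_left _ _) (le_trans h (min_le_right _ _))
            have h2 : c v ≤ c u := le_trans (le_max_right _ _) (le_trans h (min_le_left _ _))
            exact absurd (hcinj (le_antisymm h1 h2)) huv

end Helpers
section Nonempty

open SimpleGraph

/-- The complete graph minus the single edge `{u,v}`, as an interval graph. -/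
noncomputable def pairGraph {V : Type*} (u v : V) : SimpleGraph V := by
  classical
  exact intervalGraphOf (fun x => if x = v then 2 else 0) (fun x => if x = u then 1 else 3)

lemma pairGraph_adj {V : Type*} (u v : V) (huv : u ≠ v) (x y : V) :
    (pairGraph u v).Adj x y ↔ x ≠ y ∧ ¬((x = u ∧ y = v) ∨ (x = v ∧ y = u)) := by
  classical
  show (x ≠ y ∧ _) ↔ _
  refine and_congr_right fun hxy => ?_
  by_cases hxu : x = u <;> by_cases hxv : x = v <;> by_cases hyu : y = u <;>
    by_cases hyv : y = v <;>
    simp_all <;> norm_num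

lemma isIntervalGraph_pairGraph {V : Type*} (u v : V) : IsIntervalGraph (pairGraph u v) :=
  isIntervalGraph_intervalGraphOf _ _

lemma boxicity_set_nonempty {V : Type*} [Fintype V] (G : SimpleGraph V) :
    {k | ∃ I : Fin k → SimpleGraph V, (∀ i, IsIntervalGraph (I i)) ∧
      ∀ u v, G.Adj u v ↔ (u ≠ v ∧ ∀ i, (I i).Adj u v)}.Nonempty := by
  classical
  set P := {p : V × V // ¬ G.Adj p.1 p.2 ∧ p.1 ≠ p.2} with hP
  set e : Fin (Fintype.card P) ≃ P := (Fintype.equivFin P).symm with he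
  refine ⟨Fintype.card P, fun i => pairGraph (e i).1.1 (e i).1.2, ?_, ?_⟩
  · intro i; exact isIntervalGraph_pairGraph _ _
  · intro x y
    constructor
    · intro hxy
      refine ⟨hxy.ne, fun i => ?_⟩
      rw [pairGraph_adj _ _ (e i).2.2]
      refine ⟨hxy.ne, ?_⟩
      rintro (⟨h1, h2⟩ | ⟨h1, h2⟩)
      · exact (e i).2.1 (h1 ▸ h2 ▸ hxy)
      · exact (e i).2.1 (h1 ▸ h2 ▸ hxy.symm)
    · rintro ⟨hne, hall⟩
      by_contra hG
      have := hall (e.symm ⟨(x, y), hG, hne⟩)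
      rw [pairGraph_adj _ _ (e _).2.2] at this
      rw [Equiv.apply_symm_apply] at this
      exact this.2 (Or.inl ⟨rfl, rfl⟩)

end Nonempty
section Upper

open SimpleGraph

lemma intervalGraphOf_adj {V : Type*} (a b : V → ℝ) (u v : V) :
    (intervalGraphOf a b).Adj u v ↔ u ≠ v ∧ max (a u) (a v) ≤ min (b u) (b v) := Iff.rfl

lemma graphJoin_adj_ll {V₁ V₂ : Type*} (G₁ : SimpleGraph V₁) (G₂ : SimpleGraph V₂)
    (u v : V₁) : (graphJoin G₁ G₂).Adj (Sum.inl u) (Sum.inl v) ↔ G₁.Adj u v := Iff.rfl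

lemma graphJoin_adj_rr {V₁ V₂ : Type*} (G₁ : SimpleGraph V₁) (G₂ : SimpleGraph V₂)
    (u v : V₂) : (graphJoin G₁ G₂).Adj (Sum.inr u) (Sum.inr v) ↔ G₂.Adj u v := Iff.rfl

lemma graphJoin_adj_lr {V₁ V₂ : Type*} (G₁ : SimpleGraph V₁) (G₂ : SimpleGraph V₂)
    (u : V₁) (v : V₂) : (graphJoin G₁ G₂).Adj (Sum.inl u) (Sum.inr v) := trivial

lemma graphJoin_adj_rl {V₁ V₂ : Type*} (G₁ : SimpleGraph V₁) (G₂ : SimpleGraph V₂)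
    (u : V₂) (v : V₁) : (graphJoin G₁ G₂).Adj (Sum.inr u) (Sum.inl v) := trivial

lemma sum_mem_joinSet {V₁ V₂ : Type*} [Fintype V₁] [Fintype V₂]
    (G₁ : SimpleGraph V₁) (G₂ : SimpleGraph V₂) {k₁ k₂ : ℕ}
    (h₁ : k₁ ∈ {k | ∃ I : Fin k → SimpleGraph V₁, (∀ i, IsIntervalGraph (I i)) ∧
      ∀ u v, G₁.Adj u v ↔ (u ≠ v ∧ ∀ i, (I i).Adj u v)})
    (h₂ : k₂ ∈ {k | ∃ I : Fin k → SimpleGraph V₂, (∀ i, IsIntervalGraph (I i)) ∧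
      ∀ u v, G₂.Adj u v ↔ (u ≠ v ∧ ∀ i, (I i).Adj u v)}) :
    k₁ + k₂ ∈ {k | ∃ I : Fin k → SimpleGraph (V₁ ⊕ V₂), (∀ i, IsIntervalGraph (I i)) ∧
      ∀ u v, (graphJoin G₁ G₂).Adj u v ↔ (u ≠ v ∧ ∀ i, (I i).Adj u v)} := by
  obtain ⟨I₁, hI₁, hadj₁⟩ := h₁
  obtain ⟨I₂, hI₂, hadj₂⟩ := h₂
  choose a₁ b₁ hab₁ hrep₁ using fun i => exists_good_rep (hI₁ i)
  choose a₂ b₂ hab₂ hrep₂ using fun i => exists_good_rep (hI₂ i)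
  set m₁ : Fin k₁ → ℝ := fun i => -∑ u : V₁, |a₁ i u| with hm₁
  set M₁ : Fin k₁ → ℝ := fun i => ∑ u : V₁, |b₁ i u| with hM₁
  set m₂ : Fin k₂ → ℝ := fun i => -∑ u : V₂, |a₂ i u| with hm₂
  set M₂ : Fin k₂ → ℝ := fun i => ∑ u : V₂, |b₂ i u| with hM₂
  have hm₁le : ∀ i u, m₁ i ≤ a₁ i u := by
    intro i u
    have : |a₁ i u| ≤ ∑ u : V₁, |a₁ i u| :=
      Finset.single_le_sum (f := fun x => |a₁ i x|) (fun j _ => abs_nonneg _) (Finset.mem_univ u)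
    have h2 := neg_abs_le (a₁ i u)
    simp only [hm₁]; linarith
  have hM₁le : ∀ i u, b₁ i u ≤ M₁ i := by
    intro i u
    have : |b₁ i u| ≤ ∑ u : V₁, |b₁ i u| :=
      Finset.single_le_sum (f := fun x => |b₁ i x|) (fun j _ => abs_nonneg _) (Finset.mem_univ u)
    have h2 := le_abs_self (b₁ i u)
    simp only [hM₁]; linarith
  have hmM₁ : ∀ i, m₁ i ≤ M₁ i := by
    intro i
    have h1 : (0:ℝ) ≤ ∑ u : V₁, |a₁ i u| := Finset.sum_nonneg fun j _ => abs_nonneg _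
    have h2 : (0:ℝ) ≤ ∑ u : V₁, |b₁ i u| := Finset.sum_nonneg fun j _ => abs_nonneg _
    simp only [hm₁, hM₁]; linarith
  have hm₂le : ∀ i u, m₂ i ≤ a₂ i u := by
    intro i u
    have : |a₂ i u| ≤ ∑ u : V₂, |a₂ i u| :=
      Finset.single_le_sum (f := fun x => |a₂ i x|) (fun j _ => abs_nonneg _) (Finset.mem_univ u)
    have h2 := neg_abs_le (a₂ i u)
    simp only [hm₂]; linarith
  have hM₂le : ∀ i u, b₂ i u ≤ M₂ i := by
    intro i u
    have : |b₂ i u| ≤ ∑ u : V₂, |b₂ i u| :=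
      Finset.single_le_sum (f := fun x => |b₂ i x|) (fun j _ => abs_nonneg _) (Finset.mem_univ u)
    have h2 := le_abs_self (b₂ i u)
    simp only [hM₂]; linarith
  have hmM₂ : ∀ i, m₂ i ≤ M₂ i := by
    intro i
    have h1 : (0:ℝ) ≤ ∑ u : V₂, |a₂ i u| := Finset.sum_nonneg fun j _ => abs_nonneg _
    have h2 : (0:ℝ) ≤ ∑ u : V₂, |b₂ i u| := Finset.sum_nonneg fun j _ => abs_nonneg _
    simp only [hm₂, hM₂]; linarith
  set F : Fin k₁ ⊕ Fin k₂ → SimpleGraph (V₁ ⊕ V₂) :=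
    Sum.elim
      (fun j => intervalGraphOf (Sum.elim (a₁ j) fun _ => m₁ j) (Sum.elim (b₁ j) fun _ => M₁ j))
      (fun j => intervalGraphOf (Sum.elim (fun _ => m₂ j) (a₂ j)) (Sum.elim (fun _ => M₂ j) (b₂ j)))
    with hF
  refine ⟨fun i => F (finSumFinEquiv.symm i), ?_, ?_⟩
  · intro i
    show IsIntervalGraph (F (finSumFinEquiv.symm i))
    rcases finSumFinEquiv.symm i with j | j <;>
      exact isIntervalGraph_intervalGraphOf _ _
  · have hforall : ∀ (P : (Fin k₁ ⊕ Fin k₂) → Prop),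
        (∀ i : Fin (k₁ + k₂), P (finSumFinEquiv.symm i)) ↔ ∀ j, P j :=
      fun P => ⟨fun h j => by simpa using h (finSumFinEquiv j), fun h i => h _⟩
  -- key adjacency facts for F
    have hFll : ∀ (j : Fin k₁) (u v : V₁),
        (F (Sum.inl j)).Adj (Sum.inl u) (Sum.inl v) ↔ (I₁ j).Adj u v := by
      intro j u v
      rw [hF]
      simp only [Sum.elim_inl, intervalGraphOf_adj, hrep₁, ne_eq, Sum.inl.injEq]
    have hFrr : ∀ (j : Fin k₂) (u v : V₂),
        (F (Sum.inr j)).Adj (Sum.inr u) (Sum.inr v) ↔ (I₂ j).Adj u v := by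
      intro j u v
      rw [hF]
      simp only [Sum.elim_inr, intervalGraphOf_adj, hrep₂, ne_eq, Sum.inr.injEq]
    have hFll' : ∀ (j : Fin k₂) (u v : V₁), u ≠ v →
        (F (Sum.inr j)).Adj (Sum.inl u) (Sum.inl v) := by
      intro j u v huv
      rw [hF]
      refine ⟨by simpa using huv, ?_⟩
      simp only [Sum.elim_inl, max_self, min_self]
      exact hmM₂ j
    have hFrr' : ∀ (j : Fin k₁) (u v : V₂), u ≠ v →
        (F (Sum.inl j)).Adj (Sum.inr u) (Sum.inr v) := by
      intro j u v huv
      rw [hF]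
      refine ⟨by simpa using huv, ?_⟩
      simp only [Sum.elim_inr, max_self, min_self]
      exact hmM₁ j
    have hFlr : ∀ (s : Fin k₁ ⊕ Fin k₂) (u : V₁) (v : V₂),
        (F s).Adj (Sum.inl u) (Sum.inr v) := by
      rintro (j | j) u v
      · rw [hF]
        refine ⟨by simp, ?_⟩
        simp only [Sum.elim_inl, Sum.elim_inr]
        rw [max_le_iff, le_min_iff, le_min_iff]
        exact ⟨⟨hab₁ j u, le_trans (hab₁ j u) (hM₁le j u)⟩, ⟨le_trans (hm₁le j u) (hab₁ j u), hmM₁ j⟩⟩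
      · rw [hF]
        refine ⟨by simp, ?_⟩
        simp only [Sum.elim_inl, Sum.elim_inr]
        rw [max_le_iff, le_min_iff, le_min_iff]
        exact ⟨⟨hmM₂ j, le_trans (hm₂le j v) (hab₂ j v)⟩, ⟨le_trans (hab₂ j v) (hM₂le j v), hab₂ j v⟩⟩
    rintro (u | u) (v | v)
    · rw [graphJoin_adj_ll, hforall fun s => (F s).Adj (Sum.inl u) (Sum.inl v), Sum.forall,
        hadj₁]
      constructor
      · rintro ⟨huv, hall⟩
        exact ⟨by simpa using huv, fun j => (hFll j u v).mpr (hall j),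
          fun j => hFll' j u v huv⟩
      · rintro ⟨huv, hall₁, _⟩
        exact ⟨by simpa using huv, fun j => (hFll j u v).mp (hall₁ j)⟩
    · simp only [graphJoin_adj_lr, true_iff,
        hforall fun s => (F s).Adj (Sum.inl u) (Sum.inr v)]
      exact ⟨by simp, fun s => hFlr s u v⟩
    · simp only [graphJoin_adj_rl, true_iff,
        hforall fun s => (F s).Adj (Sum.inr u) (Sum.inl v)]
      exact ⟨by simp, fun s => ((F s).adj_symm (hFlr s v u))⟩
    · rw [graphJoin_adj_rr, hforall fun s => (F s).Adj (Sum.inr u) (Sum.inr v), Sum.forall,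
        hadj₂]
      constructor
      · rintro ⟨huv, hall⟩
        exact ⟨by simpa using huv, fun j => hFrr' j u v huv,
          fun j => (hFrr j u v).mpr (hall j)⟩
      · rintro ⟨huv, _, hall₂⟩
        exact ⟨by simpa using huv, fun j => (hFrr j u v).mp (hall₂ j)⟩

end Upper
section Lower

open SimpleGraph

lemma joinSet_split {V₁ V₂ : Type*} [Fintype V₁] [Fintype V₂]
    (G₁ : SimpleGraph V₁) (G₂ : SimpleGraph V₂) {k : ℕ}
    (hk : k ∈ {k | ∃ I : Fin k → SimpleGraph (V₁ ⊕ V₂), (∀ i, IsIntervalGraph (I i)) ∧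
      ∀ u v, (graphJoin G₁ G₂).Adj u v ↔ (u ≠ v ∧ ∀ i, (I i).Adj u v)}) :
    ∃ k₁ k₂ : ℕ, k₁ + k₂ = k ∧
      k₁ ∈ {k | ∃ I : Fin k → SimpleGraph V₁, (∀ i, IsIntervalGraph (I i)) ∧
        ∀ u v, G₁.Adj u v ↔ (u ≠ v ∧ ∀ i, (I i).Adj u v)} ∧
      k₂ ∈ {k | ∃ I : Fin k → SimpleGraph V₂, (∀ i, IsIntervalGraph (I i)) ∧
        ∀ u v, G₂.Adj u v ↔ (u ≠ v ∧ ∀ i, (I i).Adj u v)} := by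
  classical
  obtain ⟨I, hI, hadj⟩ := hk
  choose a b hab hrep using fun i => exists_good_rep (hI i)
  set Q : Fin k → Prop := fun i => ∀ u v : V₂, u ≠ v →
    max (a i (Sum.inr u)) (a i (Sum.inr v)) ≤ min (b i (Sum.inr u)) (b i (Sum.inr v)) with hQ
  set S : Finset (Fin k) := Finset.univ.filter Q with hS
  -- every interval of a left vertex meets every interval of a right vertex
  have hcross : ∀ (i : Fin k) (u : V₁) (v : V₂),
      max (a i (Sum.inl u)) (a i (Sum.inr v)) ≤ min (b i (Sum.inl u)) (b i (Sum.inr v)) := by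
    intro i u v
    have h := ((hadj (Sum.inl u) (Sum.inr v)).mp (graphJoin_adj_lr G₁ G₂ u v)).2 i
    exact ((hrep i _ _).mp h).2
  have claim1 : ∀ i ∉ S, ∀ u v : V₁, u ≠ v →
      max (a i (Sum.inl u)) (a i (Sum.inl v)) ≤ min (b i (Sum.inl u)) (b i (Sum.inl v)) := by
    intro i hi u v huv
    have hnq : ¬ Q i := by
      intro h
      exact hi (Finset.mem_filter.mpr ⟨Finset.mem_univ _, h⟩)
    simp only [hQ, not_forall, not_le] at hnq
    obtain ⟨x, y, hxy, hxyn⟩ := hnq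
    replace hxyn : ¬ (a i (Sum.inr x) ⊔ a i (Sum.inr y) ≤ b i (Sum.inr x) ⊓ b i (Sum.inr y)) :=
      not_le.mpr hxyn
    have hgap : ∃ p q : V₂, b i (Sum.inr p) < a i (Sum.inr q) := by
      by_contra hno
      push_neg at hno
      refine hxyn ?_
      rw [max_le_iff, le_min_iff, le_min_iff]
      exact ⟨⟨hab i _, le_of_not_gt fun h => absurd (hno y x) (not_le.mpr h)⟩,
        ⟨le_of_not_gt fun h => absurd (hno x y) (not_le.mpr h), hab i _⟩⟩
    obtain ⟨p, q, hpq⟩ := hgap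
    have h1 : ∀ w : V₁, a i (Sum.inl w) ≤ b i (Sum.inr p) := fun w =>
      le_trans (le_max_left _ _) (le_trans (hcross i w p) (min_le_right _ _))
    have h2 : ∀ w : V₁, a i (Sum.inr q) ≤ b i (Sum.inl w) := fun w =>
      le_trans (le_max_right _ _) (le_trans (hcross i w q) (min_le_left _ _))
    rw [max_le_iff, le_min_iff, le_min_iff]
    exact ⟨⟨le_of_lt (lt_of_le_of_lt (h1 u) (lt_of_lt_of_le hpq (h2 u))),
            le_of_lt (lt_of_le_of_lt (h1 u) (lt_of_lt_of_le hpq (h2 v)))⟩,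
           ⟨le_of_lt (lt_of_le_of_lt (h1 v) (lt_of_lt_of_le hpq (h2 u))),
            le_of_lt (lt_of_le_of_lt (h1 v) (lt_of_lt_of_le hpq (h2 v)))⟩⟩
  refine ⟨S.card, Sᶜ.card, ?_, ?_, ?_⟩
  · rw [Finset.card_add_card_compl, Fintype.card_fin]
  · -- G₁ is the intersection of the restrictions of the graphs in S
    refine ⟨fun j => (I (S.equivFin.symm j).1).comap Sum.inl,
      fun j => comap_intervalGraphOf _ Sum.inl_injective (hI _), fun u v => ?_⟩
    constructor
    · intro h
      have h' := (hadj (Sum.inl u) (Sum.inl v)).mp ((graphJoin_adj_ll G₁ G₂ u v).mpr h)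
      exact ⟨G₁.ne_of_adj h, fun j => h'.2 _⟩
    · rintro ⟨hne, hall⟩
      have hall' : ∀ i : Fin k, (I i).Adj (Sum.inl u) (Sum.inl v) := by
        intro i
        by_cases hi : i ∈ S
        · have := hall (S.equivFin ⟨i, hi⟩)
          rwa [SimpleGraph.comap_adj, Equiv.symm_apply_apply] at this
        · exact (hrep i _ _).mpr ⟨fun h => hne (Sum.inl_injective h), claim1 i hi u v hne⟩
      exact (graphJoin_adj_ll G₁ G₂ u v).mp
        ((hadj (Sum.inl u) (Sum.inl v)).mpr ⟨fun h => hne (Sum.inl_injective h), hall'⟩)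
  · -- G₂ is the intersection of the restrictions of the graphs in Sᶜ
    refine ⟨fun j => (I (Sᶜ.equivFin.symm j).1).comap Sum.inr,
      fun j => comap_intervalGraphOf _ Sum.inr_injective (hI _), fun u v => ?_⟩
    constructor
    · intro h
      have h' := (hadj (Sum.inr u) (Sum.inr v)).mp ((graphJoin_adj_rr G₁ G₂ u v).mpr h)
      exact ⟨G₂.ne_of_adj h, fun j => h'.2 _⟩
    · rintro ⟨hne, hall⟩
      have hall' : ∀ i : Fin k, (I i).Adj (Sum.inr u) (Sum.inr v) := by
        intro i
        by_cases hi : i ∈ Sᶜ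
        · have := hall (Sᶜ.equivFin ⟨i, hi⟩)
          rwa [SimpleGraph.comap_adj, Equiv.symm_apply_apply] at this
        · have hiS : i ∈ S := by rwa [Finset.mem_compl, not_not] at hi
          have hQi : Q i := (Finset.mem_filter.mp hiS).2
          exact (hrep i _ _).mpr ⟨fun h => hne (Sum.inr_injective h), hQi u v hne⟩
      exact (graphJoin_adj_rr G₁ G₂ u v).mp
        ((hadj (Sum.inr u) (Sum.inr v)).mpr ⟨fun h => hne (Sum.inr_injective h), hall'⟩)

end Lower

theorem boxicity_join {V₁ V₂ : Type*} [Fintype V₁] [Fintype V₂]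
    (G₁ : SimpleGraph V₁) (G₂ : SimpleGraph V₂) :
    boxicity (graphJoin G₁ G₂) = boxicity G₁ + boxicity G₂ := by
  apply le_antisymm
  · have h₁ := Nat.sInf_mem (boxicity_set_nonempty G₁)
    have h₂ := Nat.sInf_mem (boxicity_set_nonempty G₂)
    exact Nat.sInf_le (sum_mem_joinSet G₁ G₂ h₁ h₂)
  · have hk := Nat.sInf_mem (boxicity_set_nonempty (graphJoin G₁ G₂))
    obtain ⟨k₁, k₂, hsum, h1, h2⟩ := joinSet_split G₁ G₂ hk
    calc boxicity G₁ + boxicity G₂ ≤ k₁ + k₂ :=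
          Nat.add_le_add (Nat.sInf_le h1) (Nat.sInf_le h2)
      _ = boxicity (graphJoin G₁ G₂) := hsum
end

section
/- The reduced power graph R(G) of a finite group G satisfies box(R(G)) = box(Pow(G)) and cub(R(G)) = cub(Pow(G)). -/
/-- The power graph of a group: distinct `x, y` adjacent iff one is a power of the other. -/
def powerGraph (G : Type*) [Group G] : SimpleGraph G where
  Adj x y := x ≠ y ∧ ((∃ m : ℕ, y = x ^ m) ∨ (∃ m : ℕ, x = y ^ m))
  symm := ⟨fun _ _ h => ⟨h.1.symm, h.2.symm⟩⟩
  loopless := ⟨fun _ h => h.1 rfl⟩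

/-- `x ∼ y` iff `x` and `y` generate the same cyclic subgroup. -/
def genSetoid (G : Type*) [Group G] : Setoid G where
  r x y := Subgroup.zpowers x = Subgroup.zpowers y
  iseqv := ⟨fun _ => rfl, Eq.symm, Eq.trans⟩

/-- The reduced power graph: vertices are the classes of `genSetoid`, two distinct classes
being adjacent iff their representatives are adjacent in the power graph. -/
def reducedPowerGraph (G : Type*) [Group G] : SimpleGraph (Quotient (genSetoid G)) where
  Adj a b := a ≠ b ∧ ∃ x y : G,
    Quotient.mk (genSetoid G) x = a ∧ Quotient.mk (genSetoid G) y = b ∧ (powerGraph G).Adj x y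
  symm := by
    constructor
    rintro a b ⟨hab, x, y, hx, hy, hadj⟩
    exact ⟨hab.symm, y, x, hy, hx, hadj.symm⟩
  loopless := ⟨fun _ h => h.1 rfl⟩

/-!
In a finite group `y` is a power of `x` iff `⟨y⟩ ≤ ⟨x⟩`, so `Pow(G)` is obtained from `R(G)` by
replacing every class by a clique whose vertices all have the neighbours of the class; choosing
representatives exhibits `R(G)` in the same way as a (degenerate) blow-up of `Pow(G)`. An
intersection representation by (unit) intervals pulls back along such a blow-up by giving every
vertex the interval of its class. For arbitrary intervals this needs the interval of a class with
two or more elements to be nonempty, which holds since such a class is adjacent to the class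
`{1}`. Hence both graphs are intersections of the same numbers of (unit) interval graphs.
-/

section IntervalGraph

variable {V W : Type*}

def intervalGraph (a b : V → ℝ) : SimpleGraph V where
  Adj u v := u ≠ v ∧ (Set.Icc (a u) (b u) ∩ Set.Icc (a v) (b v)).Nonempty
  symm := ⟨fun _ _ h => ⟨h.1.symm, Set.inter_comm _ _ ▸ h.2⟩⟩
  loopless := ⟨fun _ h => h.1 rfl⟩

lemma isIntervalGraph_iff {I : SimpleGraph V} :
    IsIntervalGraph I ↔ ∃ a b : V → ℝ, I = intervalGraph a b := by
  simp only [IsIntervalGraph, SimpleGraph.ext_iff, funext_iff, eq_iff_iff]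
  rfl

lemma isUnitIntervalGraph_iff {I : SimpleGraph V} :
    IsUnitIntervalGraph I ↔ ∃ a : V → ℝ, I = intervalGraph a (a · + 1) := by
  simp only [IsUnitIntervalGraph, SimpleGraph.ext_iff, funext_iff, eq_iff_iff]
  rfl

namespace SimpleGraph

lemma eq_iInf_iff {ι : Type*} {G : SimpleGraph V} {I : ι → SimpleGraph V} :
    G = ⨅ i, I i ↔ ∀ u v, G.Adj u v ↔ u ≠ v ∧ ∀ i, (I i).Adj u v := by
  simp only [SimpleGraph.ext_iff, funext_iff, eq_iff_iff, iInf_adj, and_comm]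

def cliqueBlowup (H : SimpleGraph W) (f : V → W) : SimpleGraph V where
  Adj u v := u ≠ v ∧ (f u = f v ∨ H.Adj (f u) (f v))
  symm := ⟨fun _ _ h => ⟨h.1.symm, h.2.imp Eq.symm H.adj_symm⟩⟩
  loopless := ⟨fun _ h => h.1 rfl⟩

variable {H : SimpleGraph W} {f : V → W}

@[simp]
lemma cliqueBlowup_adj {u v : V} :
    (H.cliqueBlowup f).Adj u v ↔ u ≠ v ∧ (f u = f v ∨ H.Adj (f u) (f v)) :=
  Iff.rfl

lemma iInf_cliqueBlowup {ι : Type*} (I : ι → SimpleGraph W) :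
    (⨅ i, I i).cliqueBlowup f = ⨅ i, (I i).cliqueBlowup f := by
  ext u v
  simp only [cliqueBlowup_adj, iInf_adj]
  by_cases huv : u = v
  · simp [huv]
  · by_cases h : f u = f v <;> simp [h, huv]

lemma cliqueBlowup_intervalGraph (a b : W → ℝ)
    (hab : ∀ u v, u ≠ v → f u = f v → a (f u) ≤ b (f u)) :
    (intervalGraph a b).cliqueBlowup f = intervalGraph (a ∘ f) (b ∘ f) := by
  ext u v
  simp only [cliqueBlowup_adj, intervalGraph, Function.comp_apply]
  by_cases h : f u = f v
  · simp only [h, true_or, Set.inter_self, Set.nonempty_Icc]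
    exact ⟨fun h' => ⟨h'.1, h ▸ hab u v h'.1 h⟩, fun h' => ⟨h'.1, trivial⟩⟩
  · simp [h]

end SimpleGraph

open SimpleGraph

variable {H : SimpleGraph W} {f : V → W}

/-- Copying the interval of `f u` to the whole fibre of `u` turns the fibre into a clique only
if that interval is nonempty, which a neighbour of `f u` guarantees. -/
lemma IsIntervalGraph.cliqueBlowup {I : SimpleGraph W} (hI : IsIntervalGraph I)
    (hf : ∀ u v, u ≠ v → f u = f v → ∃ w, I.Adj (f u) w) :
    IsIntervalGraph (I.cliqueBlowup f) := by
  obtain ⟨a, b, rfl⟩ := isIntervalGraph_iff.1 hI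
  refine isIntervalGraph_iff.2 ⟨_, _, cliqueBlowup_intervalGraph a b fun u v huv hfuv => ?_⟩
  obtain ⟨w, -, x, hx, -⟩ := hf u v huv hfuv
  exact hx.1.trans hx.2

lemma IsUnitIntervalGraph.cliqueBlowup {I : SimpleGraph W} (hI : IsUnitIntervalGraph I) :
    IsUnitIntervalGraph (I.cliqueBlowup f) := by
  obtain ⟨a, rfl⟩ := isUnitIntervalGraph_iff.1 hI
  exact isUnitIntervalGraph_iff.2
    ⟨a ∘ f, cliqueBlowup_intervalGraph a _ fun _ _ _ _ => by linarith⟩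

def intersectionDims (P : SimpleGraph V → Prop) (G : SimpleGraph V) : Set ℕ :=
  {k | ∃ I : Fin k → SimpleGraph V, (∀ i, P (I i)) ∧ G = ⨅ i, I i}

lemma boxicity_eq_sInf_intersectionDims (G : SimpleGraph V) :
    boxicity G = sInf (intersectionDims IsIntervalGraph G) := by
  simp only [boxicity, intersectionDims, eq_iInf_iff]

lemma cubicity_eq_sInf_intersectionDims (G : SimpleGraph V) :
    cubicity G = sInf (intersectionDims IsUnitIntervalGraph G) := by
  simp only [cubicity, intersectionDims, eq_iInf_iff]

lemma intersectionDims_subset_cliqueBlowup {P : SimpleGraph W → Prop} {Q : SimpleGraph V → Prop}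
    (hPQ : ∀ I, P I → H ≤ I → Q (I.cliqueBlowup f)) :
    intersectionDims P H ⊆ intersectionDims Q (H.cliqueBlowup f) := by
  rintro k ⟨I, hI, rfl⟩
  exact ⟨fun i => (I i).cliqueBlowup f, fun i => hPQ _ (hI i) (iInf_le I i), iInf_cliqueBlowup I⟩

lemma intervalDims_subset_cliqueBlowup (hf : ∀ u v, u ≠ v → f u = f v → ∃ w, H.Adj (f u) w) :
    intersectionDims IsIntervalGraph H ⊆ intersectionDims IsIntervalGraph (H.cliqueBlowup f) :=
  intersectionDims_subset_cliqueBlowup fun _ hI hHI =>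
    hI.cliqueBlowup fun u v huv h => (hf u v huv h).imp fun _ hw => hHI hw

lemma unitIntervalDims_subset_cliqueBlowup :
    intersectionDims IsUnitIntervalGraph H ⊆
      intersectionDims IsUnitIntervalGraph (H.cliqueBlowup f) :=
  intersectionDims_subset_cliqueBlowup fun _ hI _ => hI.cliqueBlowup

theorem boxicity_eq_and_cubicity_eq_of_cliqueBlowup {G : SimpleGraph V} {g : W → V}
    (hG : G = H.cliqueBlowup f) (hH : H = G.cliqueBlowup g)
    (hf : ∀ u v, u ≠ v → f u = f v → ∃ w, H.Adj (f u) w)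
    (hg : ∀ u v, u ≠ v → g u = g v → ∃ w, G.Adj (g u) w) :
    boxicity G = boxicity H ∧ cubicity G = cubicity H := by
  simp only [boxicity_eq_sInf_intersectionDims, cubicity_eq_sInf_intersectionDims]
  constructor <;> congr 1 <;> apply Set.Subset.antisymm
  · exact hH ▸ intervalDims_subset_cliqueBlowup hg
  · exact hG ▸ intervalDims_subset_cliqueBlowup hf
  · exact hH ▸ unitIntervalDims_subset_cliqueBlowup
  · exact hG ▸ unitIntervalDims_subset_cliqueBlowup

end IntervalGraph

section PowerGraph

variable {G : Type*} [Group G]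

open SimpleGraph Subgroup

lemma genSetoid_mk_eq_iff {x y : G} :
    Quotient.mk (genSetoid G) x = Quotient.mk (genSetoid G) y ↔ zpowers x = zpowers y :=
  Quotient.eq

variable [Finite G]

lemma powerGraph_adj_iff {x y : G} :
    (powerGraph G).Adj x y ↔ x ≠ y ∧ (zpowers y ≤ zpowers x ∨ zpowers x ≤ zpowers y) := by
  have hpow (a b : G) : (∃ m : ℕ, b = a ^ m) ↔ zpowers b ≤ zpowers a := by
    rw [zpowers_le, ← mem_powers_iff_mem_zpowers, Submonoid.mem_powers_iff]
    simp only [eq_comm]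
  exact and_congr Iff.rfl (or_congr (hpow x y) (hpow y x))

lemma reducedPowerGraph_adj_mk {x y : G} :
    (reducedPowerGraph G).Adj (Quotient.mk (genSetoid G) x) (Quotient.mk (genSetoid G) y) ↔
      Quotient.mk (genSetoid G) x ≠ Quotient.mk (genSetoid G) y ∧
        (zpowers y ≤ zpowers x ∨ zpowers x ≤ zpowers y) := by
  constructor
  · rintro ⟨hne, x', y', hx, hy, hadj⟩
    rw [genSetoid_mk_eq_iff] at hx hy
    rw [powerGraph_adj_iff, hx, hy] at hadj
    exact ⟨hne, hadj.2⟩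
  · rintro ⟨hne, hle⟩
    exact ⟨hne, x, y, rfl, rfl, powerGraph_adj_iff.2 ⟨fun h => hne (h ▸ rfl), hle⟩⟩

lemma powerGraph_eq_cliqueBlowup :
    powerGraph G = (reducedPowerGraph G).cliqueBlowup (Quotient.mk _) := by
  ext x y
  simp only [cliqueBlowup_adj, reducedPowerGraph_adj_mk, powerGraph_adj_iff, ne_eq,
    genSetoid_mk_eq_iff]
  by_cases h : zpowers x = zpowers y <;> simp [h]

lemma reducedPowerGraph_eq_cliqueBlowup :
    reducedPowerGraph G = (powerGraph G).cliqueBlowup Quotient.out := by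
  ext a b
  rw [cliqueBlowup_adj, Quotient.out_injective.eq_iff, powerGraph_adj_iff]
  conv_lhs => rw [← Quotient.out_eq a, ← Quotient.out_eq b]
  rw [reducedPowerGraph_adj_mk, Quotient.out_eq, Quotient.out_eq, Quotient.out_injective.ne_iff]
  by_cases h : a = b <;> simp [h]

lemma exists_reducedPowerGraph_adj_of_mk_eq {x y : G} (hxy : x ≠ y)
    (h : Quotient.mk (genSetoid G) x = Quotient.mk (genSetoid G) y) :
    ∃ w, (reducedPowerGraph G).Adj (Quotient.mk (genSetoid G) x) w := by
  have hx : x ≠ 1 := by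
    rintro rfl
    rw [genSetoid_mk_eq_iff, zpowers_one_eq_bot, eq_comm, zpowers_eq_bot] at h
    exact hxy h.symm
  refine ⟨Quotient.mk (genSetoid G) 1, reducedPowerGraph_adj_mk.2 ⟨?_, Or.inl ?_⟩⟩
  · rwa [Ne, genSetoid_mk_eq_iff, zpowers_one_eq_bot, zpowers_eq_bot]
  · rw [zpowers_one_eq_bot]
    exact bot_le

end PowerGraph

theorem boxicity_cubicity_reducedPowerGraph (G : Type*) [Group G] [Fintype G] :
    boxicity (reducedPowerGraph G) = boxicity (powerGraph G) ∧
    cubicity (reducedPowerGraph G) = cubicity (powerGraph G) :=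
  boxicity_eq_and_cubicity_eq_of_cliqueBlowup reducedPowerGraph_eq_cliqueBlowup
    powerGraph_eq_cliqueBlowup (fun _ _ hab h => absurd (Quotient.out_injective h) hab)
    fun _ _ => exists_reducedPowerGraph_adj_of_mk_eq
end

section
/- For s ≥ 2, the boxicity of TC(H_s), the transitive closure of the s-dimensional hypercube, is at least ⌈s/2⌉. -/
/-!
In an interval representation, a non-adjacent pair `(e j, f j)` has the interval of `e j`
strictly to the left or strictly to the right of that of `f j`. If two such pairs are
cross-adjacent (`e j ~ f l` and `e l ~ f j`), they cannot lie on the same side, so a single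
interval graph separates at most two pairs of a crown `e j ≁ f j`, `e j ~ f l` (`j ≠ l`).
In `TCH s` the atoms and coatoms of the Boolean lattice form a crown with `s` pairs,
so any representation by `k` interval graphs has `s ≤ 2 k`.
-/

open Set

theorem lt_iff_not_lt_of_crossing_Icc {α : Type*} [LinearOrder α]
    {a₁ b₁ c₁ d₁ a₂ b₂ c₂ d₂ : α}
    (h₁ : ¬(Icc a₁ b₁ ∩ Icc c₁ d₁).Nonempty) (h₂ : ¬(Icc a₂ b₂ ∩ Icc c₂ d₂).Nonempty)
    (h₁₂ : (Icc a₁ b₁ ∩ Icc c₂ d₂).Nonempty) (h₂₁ : (Icc a₂ b₂ ∩ Icc c₁ d₁).Nonempty) :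
    b₁ < c₁ ↔ ¬b₂ < c₂ := by
  simp only [Icc_inter_Icc, nonempty_Icc, sup_le_iff, le_inf_iff, not_and_or, not_le] at *
  constructor <;> intro h <;>
    rcases h₁ with (h₁ | h₁) | h₁ | h₁ <;> rcases h₂ with (h₂ | h₂) | h₂ | h₂ <;> order

namespace IsIntervalGraph

variable {V : Type*} {I : SimpleGraph V}

theorem card_le_two (hI : IsIntervalGraph I) {ι : Type*} {e f : ι → V}
    (hne : ∀ j, e j ≠ f j) (hadj : ∀ j l, j ≠ l → I.Adj (e j) (f l))
    {S : Finset ι} (hS : ∀ j ∈ S, ¬I.Adj (e j) (f j)) : S.card ≤ 2 := by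
  obtain ⟨a, b, hab⟩ := hI
  have meet : ∀ u v, I.Adj u v → (Icc (a u) (b u) ∩ Icc (a v) (b v)).Nonempty :=
    fun u v h => ((hab u v).1 h).2
  have disjoint : ∀ j ∈ S, ¬(Icc (a (e j)) (b (e j)) ∩ Icc (a (f j)) (b (f j))).Nonempty :=
    fun j hj h => hS j hj ((hab _ _).2 ⟨hne j, h⟩)
  by_contra! hS₂
  obtain ⟨j, hj, l, hl, hjl, hside⟩ := Finset.exists_ne_map_eq_of_card_lt_of_maps_to
    (t := Finset.univ) (by simpa using hS₂) (f := fun j => decide (b (e j) < a (f j)))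
    (fun _ _ => Finset.mem_univ _)
  have := lt_iff_not_lt_of_crossing_Icc (disjoint j hj) (disjoint l hl)
    (meet _ _ (hadj j l hjl)) (meet _ _ (hadj l j hjl.symm))
  simp only [decide_eq_decide] at hside
  tauto

end IsIntervalGraph

theorem isIntervalGraph_top_deleteEdges {V : Type*} {p q : V} (hpq : p ≠ q) :
    IsIntervalGraph ((⊤ : SimpleGraph V).deleteEdges {s(p, q)}) := by
  classical
  refine ⟨fun w => if w = q then 2 else 0, fun w => if w = p then 1 else 3, fun u v => ?_⟩
  simp only [SimpleGraph.deleteEdges_adj, SimpleGraph.top_adj, mem_singleton_iff,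
    Sym2.eq_iff, Icc_inter_Icc, nonempty_Icc]
  by_cases huv : u = v
  · simp [huv]
  by_cases hup : u = p <;> by_cases huq : u = q <;> by_cases hvp : v = p <;> by_cases hvq : v = q <;>
    simp_all <;> norm_num

theorem exists_intervalGraph_family {V : Type*} [Finite V] (G : SimpleGraph V) :
    ∃ k, ∃ I : Fin k → SimpleGraph V, (∀ i, IsIntervalGraph (I i)) ∧
      ∀ u v, G.Adj u v ↔ (u ≠ v ∧ ∀ i, (I i).Adj u v) := by
  let ι := {x : V × V // Gᶜ.Adj x.1 x.2}
  let I : ι → SimpleGraph V := fun x => (⊤ : SimpleGraph V).deleteEdges {s(x.1.1, x.1.2)}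
  refine ⟨Nat.card ι, I ∘ (Finite.equivFin ι).symm,
    fun i => isIntervalGraph_top_deleteEdges ((Finite.equivFin ι).symm i).2.ne,
    fun u v => ?_⟩
  rw [Function.comp_def, (Finite.equivFin ι).symm.forall_congr_right (q := fun x => (I x).Adj u v)]
  simp only [I, SimpleGraph.deleteEdges_adj, SimpleGraph.top_adj, mem_singleton_iff]
  refine ⟨fun h => ⟨h.ne, fun x => ⟨h.ne, fun hx => ?_⟩⟩, fun ⟨huv, h⟩ => ?_⟩
  · rw [← SimpleGraph.mem_edgeSet, hx, SimpleGraph.mem_edgeSet] at h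
    exact x.2.2 h
  · by_contra hG
    exact (h ⟨(u, v), huv, hG⟩).2 rfl

theorem le_boxicity {V : Type*} [Finite V] {G : SimpleGraph V} {n : ℕ}
    (h : ∀ k (I : Fin k → SimpleGraph V), (∀ i, IsIntervalGraph (I i)) →
      (∀ u v, G.Adj u v ↔ (u ≠ v ∧ ∀ i, (I i).Adj u v)) → n ≤ k) :
    n ≤ boxicity G :=
  le_csInf (exists_intervalGraph_family G) fun k ⟨I, hI, hG⟩ => h k I hI hG

theorem card_div_two_le_boxicity {V : Type*} [Finite V] {G : SimpleGraph V}
    {ι : Type*} [Fintype ι] {e f : ι → V} (hne : ∀ j, e j ≠ f j)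
    (hnadj : ∀ j, ¬G.Adj (e j) (f j)) (hadj : ∀ j l, j ≠ l → G.Adj (e j) (f l)) :
    (Fintype.card ι + 1) / 2 ≤ boxicity G := by
  classical
  refine le_boxicity fun k I hI hG => ?_
  have separated : ∀ j, ∃ i, ¬(I i).Adj (e j) (f j) := by
    intro j
    by_contra! h
    exact hnadj j ((hG _ _).2 ⟨hne j, h⟩)
  choose sep hsep using separated
  have hcard : Fintype.card ι ≤ 2 * k := by
    simpa using Finset.card_le_mul_card_image_of_maps_to (s := Finset.univ)
      (t := Finset.univ) (fun j _ => Finset.mem_univ (sep j)) 2 fun i _ =>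
        (hI i).card_le_two hne (fun j l hjl => ((hG _ _).1 (hadj j l hjl)).2 i)
          fun j hj => by simpa [(Finset.mem_filter.1 hj).2] using hsep j
  omega

namespace TCH

variable {s : ℕ}

def atom (j : Fin s) : ∀ _ : Fin s, Fin 2 := Pi.single j 1

def coatom (j : Fin s) : ∀ _ : Fin s, Fin 2 := Function.update 1 j 0

theorem atom_ne_coatom (j : Fin s) : atom j ≠ coatom j := fun h => by
  simpa [atom, coatom] using congrFun h j

theorem not_adj_atom_coatom (hs : 2 ≤ s) (j : Fin s) : ¬(TCH s).Adj (atom j) (coatom j) := by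
  obtain ⟨l, hl⟩ := Fintype.exists_ne_of_one_lt_card (by simp; omega) j
  rintro ⟨-, h | h⟩
  · simpa [atom, coatom] using h j
  · simpa [atom, coatom, hl] using h l

theorem adj_atom_coatom (hs : 3 ≤ s) {j l : Fin s} (hjl : j ≠ l) :
    (TCH s).Adj (atom j) (coatom l) := by
  obtain ⟨m, -, hm⟩ := Finset.exists_mem_notMem_of_card_lt_card
    (s := {j, l}) (t := Finset.univ) (by simpa using Finset.card_le_two.trans_lt hs)
  rw [Finset.mem_insert, Finset.mem_singleton, not_or] at hm
  refine ⟨fun h => by simpa [atom, coatom, hm.1, hm.2] using congrFun h m, Or.inl fun i => ?_⟩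
  by_cases hij : i = j
  · simp [atom, coatom, hij, hjl]
  · simp [atom, coatom, hij]

end TCH

theorem boxicity_TCH_lower (s : ℕ) (hs : 2 ≤ s) :
    (s + 1) / 2 ≤ boxicity (TCH s) := by
  obtain rfl | hs₃ := hs.eq_or_lt
  -- in `TCH 2` the atom of one coordinate is the coatom of the other, so the crown has one pair
  · simpa using card_div_two_le_boxicity (ι := Fin 1) (fun _ => TCH.atom_ne_coatom 0)
      (fun _ => TCH.not_adj_atom_coatom le_rfl 0) (fun j l hjl => absurd (Subsingleton.elim j l) hjl)
  · simpa using card_div_two_le_boxicity TCH.atom_ne_coatom (TCH.not_adj_atom_coatom hs)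
      fun _ _ => TCH.adj_atom_coatom hs₃
end

section
/- For s ≥ 2, cub(TCC(a₁, a₂, …, a_s)) ≤ cub(TCC(a₁, a₂, …, a_{s−1})) + a_s. -/
/-!
`TCC a` is the comparability graph of the product order on `Fin (a_s + 1) × P`, where `P` is the
poset of `TCC (Fin.init a)`. Start from an optimal unit-cube representation `f` of the
comparability graph of `P` and a strictly monotone `σ : P → [0, 1]`. For each threshold `c < a_s`
add the coordinate `(t, p) ↦ [c < t] - σ p`. Comparable pairs stay within distance `1` in it,
because `σ` is monotone with values in `[0, 1]`. If `p < q` but `t > t'`, the threshold `c = t'`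
puts `(t, p)` and `(t', q)` at distance `1 + σ q - σ p > 1`. Pairs with incomparable `P`-parts are
already separated by `f`.
-/

open SimpleGraph

variable {V W ι α : Type*}

lemma unitIntervals_inter_nonempty_iff (x y : ℝ) :
    (Set.Icc x (x + 1) ∩ Set.Icc y (y + 1)).Nonempty ↔ |x - y| ≤ 1 := by
  rw [Set.Icc_inter_Icc, Set.nonempty_Icc, abs_sub_le_iff, le_min_iff, max_le_iff, max_le_iff]
  constructor
  · rintro ⟨⟨h1, h2⟩, h3, h4⟩; constructor <;> linarith
  · rintro ⟨h1, h2⟩; refine ⟨⟨?_, ?_⟩, ?_, ?_⟩ <;> linarith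

noncomputable def unitIntervalGraph (f : V → ℝ) : SimpleGraph V :=
  fromRel fun u v => |f u - f v| ≤ 1

lemma unitIntervalGraph_adj {f : V → ℝ} {u v : V} :
    (unitIntervalGraph f).Adj u v ↔ u ≠ v ∧ |f u - f v| ≤ 1 := by
  simp [unitIntervalGraph, abs_sub_comm (f v)]

lemma isUnitIntervalGraph_iff_s12 {G : SimpleGraph V} :
    IsUnitIntervalGraph G ↔ ∃ f : V → ℝ, G = unitIntervalGraph f := by
  simp only [IsUnitIntervalGraph, unitIntervals_inter_nonempty_iff, SimpleGraph.ext_iff,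
    funext_iff, eq_iff_iff, unitIntervalGraph_adj]

def IsCubeRepresentation (G : SimpleGraph V) (f : ι → V → ℝ) : Prop :=
  ∀ ⦃u v⦄, u ≠ v → (G.Adj u v ↔ ∀ i, |f i u - f i v| ≤ 1)

namespace IsCubeRepresentation

variable {G : SimpleGraph V} {f : ι → V → ℝ}

lemma abs_sub_le_one (hf : IsCubeRepresentation G f) {u v : V} (h : G.Adj u v ∨ u = v) (i : ι) :
    |f i u - f i v| ≤ 1 := by
  rcases h with h | rfl
  · exact (hf h.ne).1 h i
  · simp

lemma comap {H : SimpleGraph W} {f : ι → W → ℝ} (hf : IsCubeRepresentation H f) (e : G ↪g H) :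
    IsCubeRepresentation G fun i => f i ∘ e :=
  fun _ _ huv => e.map_adj_iff.symm.trans (hf (e.injective.ne huv))

lemma exists_fin [Finite ι] (hf : IsCubeRepresentation G f) :
    ∃ g : Fin (Nat.card ι) → V → ℝ, IsCubeRepresentation G g := by
  let e := Finite.equivFin ι
  exact ⟨fun k => f (e.symm k), fun _ _ huv => (hf huv).trans e.symm.forall_congr_right.symm⟩

end IsCubeRepresentation

lemma cubicity_eq_sInf (G : SimpleGraph V) :
    cubicity G = sInf {k | ∃ f : Fin k → V → ℝ, IsCubeRepresentation G f} := by
  unfold cubicity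
  congr 1
  ext k
  constructor
  · rintro ⟨I, hI, hG⟩
    choose f hf using fun i => isUnitIntervalGraph_iff_s12.1 (hI i)
    refine ⟨f, fun u v huv => ?_⟩
    simp [hG, hf, unitIntervalGraph_adj, huv]
  · rintro ⟨f, hf⟩
    refine ⟨fun i => unitIntervalGraph (f i), fun i => isUnitIntervalGraph_iff_s12.2 ⟨f i, rfl⟩,
      fun u v => ?_⟩
    by_cases huv : u = v
    · simp [huv]
    · simp [hf huv, unitIntervalGraph_adj, huv]

lemma cubicity_le_of_isCubeRepresentation [Finite ι] {G : SimpleGraph V} {f : ι → V → ℝ}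
    (hf : IsCubeRepresentation G f) : cubicity G ≤ Nat.card ι := by
  rw [cubicity_eq_sInf]
  exact Nat.sInf_le hf.exists_fin

lemma isCubeRepresentation_separating [DecidableEq V] (G : SimpleGraph V) [DecidableRel G.Adj] :
    IsCubeRepresentation G fun (pq : V × V) x =>
      if G.Adj pq.1 pq.2 then (0 : ℝ) else if x = pq.1 then 0 else if x = pq.2 then 2 else 1 := by
  intro u v huv
  constructor
  · rintro hadj ⟨p, q⟩
    dsimp only
    split_ifs <;> subst_vars <;> norm_num <;> simp_all [G.adj_comm]
  · intro h
    by_contra hadj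
    simpa [hadj, Ne.symm huv, abs_of_nonneg] using h (u, v)

lemma exists_isCubeRepresentation_cubicity [Finite V] (G : SimpleGraph V) :
    ∃ f : Fin (cubicity G) → V → ℝ, IsCubeRepresentation G f := by
  classical
  rw [cubicity_eq_sInf]
  exact Nat.sInf_mem (s := {k | ∃ f : Fin k → V → ℝ, IsCubeRepresentation G f})
    ⟨_, (isCubeRepresentation_separating G).exists_fin⟩

lemma cubicity_le_of_embedding [Finite W] {G : SimpleGraph V} {H : SimpleGraph W} (e : G ↪g H) :
    cubicity G ≤ cubicity H := by
  obtain ⟨f, hf⟩ := exists_isCubeRepresentation_cubicity H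
  simpa using cubicity_le_of_isCubeRepresentation (hf.comap e)

lemma cubicity_fromRel_le_of_orderEmbedding [LE α] {β : Type*} [LE β] [Finite β] (e : α ↪o β) :
    cubicity (fromRel (V := α) (· ≤ ·)) ≤ cubicity (fromRel (V := β) (· ≤ ·)) :=
  cubicity_le_of_embedding ⟨e.toEmbedding, by simp [e.map_rel_iff]⟩

lemma exists_strictMono_mem_Icc [Preorder α] [Finite α] :
    ∃ σ : α → ℝ, StrictMono σ ∧ ∀ x, σ x ∈ Set.Icc 0 1 := by
  classical
  have := Fintype.ofFinite α
  refine ⟨fun x => (Finset.univ.filter (· < x)).card / Fintype.card α, fun x y hxy => ?_,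
    fun x => ⟨by positivity, ?_⟩⟩
  · have hpos : (0 : ℝ) < Fintype.card α := by exact_mod_cast Fintype.card_pos_iff.2 ⟨x⟩
    have hsub : Finset.univ.filter (· < x) ⊂ Finset.univ.filter (· < y) :=
      (Finset.ssubset_iff_of_subset fun z => by simpa using fun hz => hz.trans hxy).2
        ⟨x, by simpa using hxy, by simp⟩
    exact div_lt_div_of_pos_right (by exact_mod_cast Finset.card_lt_card hsub) hpos
  · exact div_le_one_of_le₀ (by exact_mod_cast Finset.card_le_univ _) (by positivity)

lemma abs_threshold_sub_threshold_le_one {s t c : ℕ} {a b : ℝ} (hst : s ≤ t) (hab : a ≤ b)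
    (hba : b ≤ a + 1) :
    |((if c < s then 1 else 0) - a) - ((if c < t then 1 else 0) - b)| ≤ 1 := by
  rw [abs_le]
  split_ifs <;> first | omega | constructor <;> linarith

section ProdFin

variable [PartialOrder α] {m : ℕ} {f : ι → α → ℝ} {σ : α → ℝ}

noncomputable def prodCoords (f : ι → α → ℝ) (σ : α → ℝ) :
    ι ⊕ Fin m → Fin (m + 1) × α → ℝ :=
  Sum.elim (fun j x => f j x.2) fun c x => (if (c : ℕ) < x.1 then 1 else 0) - σ x.2

lemma abs_prodCoords_sub_le_one (hf : IsCubeRepresentation (fromRel (V := α) (· ≤ ·)) f)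
    (hσ : Monotone σ) (hσ01 : ∀ a, σ a ∈ Set.Icc 0 1) {x y : Fin (m + 1) × α} (hxy : x ≤ y) :
    ∀ i, |prodCoords f σ i x - prodCoords f σ i y| ≤ 1
  | .inl j => hf.abs_sub_le_one ((eq_or_ne x.2 y.2).symm.imp
      (fun h => fromRel_adj _ _ _ |>.2 ⟨h, .inl hxy.2⟩) id) j
  | .inr _ => abs_threshold_sub_threshold_le_one hxy.1 (hσ hxy.2)
      (by linarith [(hσ01 x.2).1, (hσ01 y.2).2])

lemma le_of_abs_prodCoords_sub_le_one (hσ : StrictMono σ) {x y : Fin (m + 1) × α}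
    (hlt : x.2 < y.2)
    (h : ∀ c : Fin m, |prodCoords f σ (.inr c) x - prodCoords f σ (.inr c) y| ≤ 1) : x ≤ y := by
  refine ⟨?_, hlt.le⟩
  by_contra! hyx
  have hy : (y.1 : ℕ) < m := by omega
  have := h ⟨y.1, hy⟩
  simp only [prodCoords, Sum.elim_inr, Fin.val_fin_lt.2 hyx, lt_irrefl, if_true, if_false,
    abs_le] at this
  linarith [hσ hlt]

lemma IsCubeRepresentation.prod_fin (hf : IsCubeRepresentation (fromRel (V := α) (· ≤ ·)) f)
    (hσ : StrictMono σ) (hσ01 : ∀ a, σ a ∈ Set.Icc 0 1) :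
    IsCubeRepresentation (fromRel (V := Fin (m + 1) × α) (· ≤ ·)) (prodCoords f σ) := by
  intro x y hxy
  have hclose {x y : Fin (m + 1) × α} (hxy : x ≤ y) :=
    abs_prodCoords_sub_le_one hf hσ.monotone hσ01 hxy
  rw [fromRel_adj]
  refine ⟨fun ⟨_, h⟩ => h.elim hclose fun h i => abs_sub_comm (α := ℝ) .. ▸ hclose h i,
    fun h => ⟨hxy, ?_⟩⟩
  rcases eq_or_ne x.2 y.2 with h2 | h2
  · exact (le_total x.1 y.1).imp (fun h1 => ⟨h1, h2.le⟩) fun h1 => ⟨h1, h2.ge⟩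
  · obtain ⟨-, hx2y2 | hy2x2⟩ := (fromRel_adj _ _ _).1 ((hf h2).2 fun j => h (.inl j))
    · exact .inl (le_of_abs_prodCoords_sub_le_one hσ (hx2y2.lt_of_ne h2) fun c => h (.inr c))
    · exact .inr (le_of_abs_prodCoords_sub_le_one hσ (hy2x2.lt_of_ne h2.symm) fun c =>
        abs_sub_comm (α := ℝ) .. ▸ h (.inr c))

theorem cubicity_fromRel_prod_fin_le [Finite α] (m : ℕ) :
    cubicity (fromRel (V := Fin (m + 1) × α) (· ≤ ·)) ≤
      cubicity (fromRel (V := α) (· ≤ ·)) + m := by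
  obtain ⟨f, hf⟩ := exists_isCubeRepresentation_cubicity (fromRel (V := α) (· ≤ ·))
  obtain ⟨σ, hσ, hσ01⟩ := exists_strictMono_mem_Icc (α := α)
  simpa using cubicity_le_of_isCubeRepresentation (hf.prod_fin (m := m) hσ hσ01)

end ProdFin

lemma TCC_eq_fromRel {d : ℕ} (m : Fin d → ℕ) : TCC m = fromRel (· ≤ ·) := by
  ext x y
  rfl

theorem cubicity_TCC_rec_general {n : ℕ} (a : Fin (n + 1) → ℕ) :
    cubicity (TCC a) ≤ cubicity (TCC (Fin.init a)) + a (Fin.last n) := by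
  rw [TCC_eq_fromRel, TCC_eq_fromRel]
  calc _ ≤ cubicity (fromRel (V := Fin (a (Fin.last n) + 1) × ∀ i : Fin n, Fin (Fin.init a i + 1))
          (· ≤ ·)) :=
        cubicity_fromRel_le_of_orderEmbedding
          (Fin.snocOrderIso fun i => Fin (a i + 1)).symm.toOrderEmbedding
    _ ≤ _ := cubicity_fromRel_prod_fin_le _

theorem cubicity_TCC_rec {n : ℕ} (hn : 1 ≤ n) (a : Fin (n + 1) → ℕ) :
    cubicity (TCC a) ≤ cubicity (TCC (Fin.init a)) + a (Fin.last n) :=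
  cubicity_TCC_rec_general a
end

section
/- Let m₁ ≤ m₂ ≤ ⋯ ≤ m_d be natural numbers with d ≥ 2. Then box(TCC(m₁,…,m_d)) ≤ cub(TCC(m₁,…,m_d)) ≤ m₁ + m₂ + ⋯ + m_{d−1}. -/
def unitGraph {V : Type*} (a : V → ℝ) : SimpleGraph V where
  Adj u v := u ≠ v ∧ |a u - a v| ≤ 1
  symm := ⟨fun u v h => ⟨h.1.symm, by rw [abs_sub_comm]; exact h.2⟩⟩
  loopless := ⟨fun v h => h.1 rfl⟩

lemma unitGraph_isUnit {V : Type*} (a : V → ℝ) : IsUnitIntervalGraph (unitGraph a) := by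
  refine ⟨a, fun u v => ?_⟩
  show (u ≠ v ∧ _) ↔ _
  rw [Set.Icc_inter_Icc, Set.nonempty_Icc, le_min_iff, max_le_iff, max_le_iff]
  constructor
  · rintro ⟨h1, h2⟩
    rw [abs_sub_le_iff] at h2
    exact ⟨h1, ⟨by linarith [h2.1, h2.2], by linarith [h2.1, h2.2]⟩, ⟨by linarith [h2.1, h2.2], by linarith [h2.1, h2.2]⟩⟩
  · rintro ⟨h1, h2, h3⟩
    exact ⟨h1, abs_sub_le_iff.2 ⟨by linarith [h2.2, h3.1], by linarith [h2.2, h3.1]⟩⟩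

section TCCaux

variable {d : ℕ} {μ : Fin d → ℕ}

/-- sum of coordinates with index above `j` -/
def hsum (j : Fin d) (x : ∀ i, Fin (μ i + 1)) : ℕ :=
  ∑ k : Fin d, if j < k then (x k : ℕ) else 0

/-- the left endpoint function for the unit interval graph with index `(j,t)` -/
noncomputable def Afun (j : Fin d) (t : ℕ) (x : ∀ i, Fin (μ i + 1)) : ℝ :=
  (if t ≤ (x j : ℕ) then 1 else 0)
    - (hsum j x) * (1 / ((∑ k : Fin d, μ k : ℕ) + 1))

lemma hsum_le (j : Fin d) (x : ∀ i, Fin (μ i + 1)) : hsum j x ≤ ∑ k : Fin d, μ k := by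
  refine Finset.sum_le_sum fun k _ => ?_
  split_ifs
  · exact Fin.is_le _
  · exact Nat.zero_le _

lemma eps_pos : (0:ℝ) < 1 / ((∑ k : Fin d, μ k : ℕ) + 1) := by positivity

lemma close_of_le (x y : ∀ i, Fin (μ i + 1)) (hxy : ∀ i, (x i : ℕ) ≤ y i)
    (j : Fin d) (t : ℕ) : |Afun j t x - Afun j t y| ≤ 1 := by
  set M : ℕ := ∑ k : Fin d, μ k with hM
  set ε : ℝ := 1 / ((M : ℕ) + 1) with hε
  have hε0 : (0:ℝ) < ε := eps_pos
  have hMε : (M : ℝ) * ε < 1 := by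
    rw [hε]
    rw [div_eq_inv_mul, mul_one, mul_comm]
    rw [inv_mul_lt_iff₀ (by positivity)]
    linarith
  have hhx : (hsum j x : ℝ) ≤ M := by exact_mod_cast hsum_le j x
  have hhy : (hsum j y : ℝ) ≤ M := by exact_mod_cast hsum_le j y
  have hmono : (hsum j x : ℝ) ≤ hsum j y := by
    have : hsum j x ≤ hsum j y := by
      refine Finset.sum_le_sum fun k _ => ?_
      split_ifs
      · exact hxy k
      · exact le_refl 0
    exact_mod_cast this
  have hx0 : (0:ℝ) ≤ (hsum j x : ℝ) := Nat.cast_nonneg _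
  have hy0 : (0:ℝ) ≤ (hsum j y : ℝ) := Nat.cast_nonneg _
  have hgap : ((hsum j y : ℝ) - hsum j x) * ε < 1 :=
    lt_of_le_of_lt (by nlinarith) hMε
  have hgap0 : (0:ℝ) ≤ ((hsum j y : ℝ) - hsum j x) * ε := by nlinarith
  have hu : (0:ℝ) ≤ (if t ≤ (y j : ℕ) then (1:ℝ) else 0) - (if t ≤ (x j : ℕ) then (1:ℝ) else 0) ∧
      (if t ≤ (y j : ℕ) then (1:ℝ) else 0) - (if t ≤ (x j : ℕ) then (1:ℝ) else 0) ≤ 1 := by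
    have := hxy j
    split_ifs with h1 h2 h2 <;> norm_num <;> omega
  rw [Afun, Afun, abs_sub_le_iff]
  constructor <;> nlinarith [hu.1, hu.2]

end TCCaux

section TCCsep

variable {d : ℕ} {μ : Fin d → ℕ}

lemma sep_core (x y : ∀ i, Fin (μ i + 1)) (c : Fin d)
    (hc : ∀ k, c < k → (x k : ℕ) ≤ (y k : ℕ))
    (hxc : (x c : ℕ) < (y c : ℕ))
    (h2 : ∃ k, (y k : ℕ) < (x k : ℕ)) :
    ∃ j : Fin d, (j : ℕ) < d - 1 ∧ ∃ t : ℕ, 1 ≤ t ∧ t ≤ μ j ∧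
      1 < |Afun j t x - Afun j t y| := by
  classical
  set s : Finset (Fin d) := Finset.univ.filter (fun k => (y k : ℕ) < (x k : ℕ)) with hs
  have hsne : s.Nonempty := by
    obtain ⟨k, hk⟩ := h2
    exact ⟨k, by rw [hs, Finset.mem_filter]; exact ⟨Finset.mem_univ _, hk⟩⟩
  set b : Fin d := s.max' hsne with hb
  have hbmem : (y b : ℕ) < (x b : ℕ) := by
    have := s.max'_mem hsne
    exact (Finset.mem_filter.1 this).2
  have hbmax : ∀ k, b < k → (x k : ℕ) ≤ (y k : ℕ) := by
    intro k hk
    by_contra hcon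
    push_neg at hcon
    have : k ∈ s := by rw [hs, Finset.mem_filter]; exact ⟨Finset.mem_univ _, hcon⟩
    exact absurd (s.le_max' k this) (not_le.2 hk)
  have hbc : b < c := by
    rcases lt_trichotomy b c with h | h | h
    · exact h
    · exfalso; rw [h] at hbmem; omega
    · exfalso; exact absurd (hc b h) (by omega)
  refine ⟨b, ?_, (y b : ℕ) + 1, le_add_self, by have := Fin.is_le (x b); omega, ?_⟩
  · have : (c : ℕ) < d := c.isLt
    have : (b : ℕ) < (c : ℕ) := hbc
    omega
  · set M : ℕ := ∑ k : Fin d, μ k with hM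
    set ε : ℝ := 1 / ((M : ℕ) + 1) with hε
    have hε0 : (0:ℝ) < ε := eps_pos
    have hstrict : hsum b x < hsum b y := by
      refine Finset.sum_lt_sum (fun k _ => ?_) ⟨c, Finset.mem_univ c, ?_⟩
      · split_ifs with h
        · exact hbmax k h
        · exact le_refl 0
      · rw [if_pos hbc, if_pos hbc]; exact hxc
    have hgap : (1:ℝ) ≤ (hsum b y : ℝ) - hsum b x := by
      have : hsum b x + 1 ≤ hsum b y := hstrict
      have := (Nat.cast_le (α := ℝ)).2 this
      push_cast at this
      linarith
    have hux : ((y b : ℕ) + 1 ≤ (x b : ℕ)) := hbmem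
    have huy : ¬ ((y b : ℕ) + 1 ≤ (y b : ℕ)) := by omega
    have hcalc : Afun b ((y b : ℕ) + 1) x - Afun b ((y b : ℕ) + 1) y
        = 1 + ((hsum b y : ℝ) - hsum b x) * ε := by
      rw [Afun, Afun, if_pos hux, if_neg huy, ← hM, ← hε]
      ring
    have : 1 < Afun b ((y b : ℕ) + 1) x - Afun b ((y b : ℕ) + 1) y := by
      rw [hcalc]; nlinarith
    exact lt_of_lt_of_le this (le_abs_self _)

lemma sep (x y : ∀ i, Fin (μ i + 1))
    (h1 : ∃ k, (x k : ℕ) < (y k : ℕ)) (h2 : ∃ k, (y k : ℕ) < (x k : ℕ)) :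
    ∃ j : Fin d, (j : ℕ) < d - 1 ∧ ∃ t : ℕ, 1 ≤ t ∧ t ≤ μ j ∧
      1 < |Afun j t x - Afun j t y| := by
  classical
  set s : Finset (Fin d) := Finset.univ.filter (fun k => (x k : ℕ) ≠ (y k : ℕ)) with hs
  have hsne : s.Nonempty := by
    obtain ⟨k, hk⟩ := h1
    exact ⟨k, by simp [hs]; omega⟩
  set c : Fin d := s.max' hsne with hc
  have hcmem : (x c : ℕ) ≠ (y c : ℕ) := by
    have := s.max'_mem hsne
    simpa [hs] using this
  have hcmax : ∀ k, c < k → (x k : ℕ) = (y k : ℕ) := by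
    intro k hk
    by_contra hcon
    have : k ∈ s := by rw [hs, Finset.mem_filter]; exact ⟨Finset.mem_univ _, hcon⟩
    exact absurd (s.le_max' k this) (not_le.2 hk)
  rcases lt_or_gt_of_ne hcmem with h | h
  · exact sep_core x y c (fun k hk => le_of_eq (hcmax k hk)) h h2
  · obtain ⟨j, hj, t, ht1, ht2, ht3⟩ :=
      sep_core y x c (fun k hk => le_of_eq (hcmax k hk).symm) h h1
    exact ⟨j, hj, t, ht1, ht2, by rwa [abs_sub_comm]⟩

end TCCsep

lemma cub_mem {d : ℕ} (μ : Fin d → ℕ) :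
    (∑ j : Fin (d-1), μ (Fin.castLE (Nat.sub_le d 1) j)) ∈
      {k | ∃ I : Fin k → SimpleGraph (∀ i, Fin (μ i + 1)),
        (∀ i, IsUnitIntervalGraph (I i)) ∧
        ∀ u v, (TCC μ).Adj u v ↔ (u ≠ v ∧ ∀ i, (I i).Adj u v)} := by
  classical
  have hcard : Fintype.card (Σ j : Fin (d-1), Fin (μ (Fin.castLE (Nat.sub_le d 1) j)))
      = ∑ j : Fin (d-1), μ (Fin.castLE (Nat.sub_le d 1) j) := by
    simp
  set e := Fintype.equivFinOfCardEq hcard with he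
  refine ⟨fun i => unitGraph (fun x =>
      Afun (Fin.castLE (Nat.sub_le d 1) (e.symm i).1) (((e.symm i).2 : ℕ) + 1) x),
    fun i => unitGraph_isUnit _, fun u v => ?_⟩
  show (u ≠ v ∧ ((∀ i, (u i : ℕ) ≤ v i) ∨ (∀ i, (v i : ℕ) ≤ u i))) ↔ _
  constructor
  · rintro ⟨hne, hcomp⟩
    refine ⟨hne, fun i => ⟨hne, ?_⟩⟩
    rcases hcomp with h | h
    · exact close_of_le u v h _ _
    · rw [abs_sub_comm]; exact close_of_le v u h _ _
  · rintro ⟨hne, hall⟩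
    refine ⟨hne, ?_⟩
    by_contra hcon
    push_neg at hcon
    obtain ⟨⟨k1, hk1⟩, ⟨k2, hk2⟩⟩ := hcon
    obtain ⟨j, hj, t, ht1, ht2, habs⟩ := sep u v ⟨k2, hk2⟩ ⟨k1, hk1⟩
    set t' : Fin (μ (Fin.castLE (Nat.sub_le d 1) ⟨(j:ℕ), hj⟩)) :=
      ⟨t - 1, by show t - 1 < μ j; omega⟩ with ht'
    have hadj := (hall (e ⟨⟨(j:ℕ), hj⟩, t'⟩)).2
    rw [Equiv.symm_apply_apply] at hadj
    have h1 : ((t' : ℕ)) + 1 = t := by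
      show t - 1 + 1 = t; omega
    rw [h1] at hadj
    have habs' : 1 < |Afun (μ := μ) (Fin.castLE (Nat.sub_le d 1) ⟨(j:ℕ), hj⟩) t u
        - Afun (Fin.castLE (Nat.sub_le d 1) ⟨(j:ℕ), hj⟩) t v| := habs
    exact absurd hadj (not_le.2 habs')

lemma unit_isInterval {V : Type*} {I : SimpleGraph V} (h : IsUnitIntervalGraph I) :
    IsIntervalGraph I := by
  obtain ⟨a, ha⟩ := h
  exact ⟨a, fun v => a v + 1, ha⟩

theorem boxicity_cubicity_TCC_upper (d : ℕ) (hd : 2 ≤ d) (m : ℕ → ℕ)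
    (hm : ∀ i j : ℕ, i ≤ j → j < d → m i ≤ m j) :
    boxicity (TCC (fun i : Fin d => m i)) ≤ cubicity (TCC (fun i : Fin d => m i)) ∧
    cubicity (TCC (fun i : Fin d => m i)) ≤ ∑ i ∈ Finset.range (d - 1), m i := by
  classical
  set μ : Fin d → ℕ := fun i : Fin d => m i with hμ
  have hsum : (∑ j : Fin (d-1), μ (Fin.castLE (Nat.sub_le d 1) j))
      = ∑ i ∈ Finset.range (d - 1), m i := by
    rw [← Fin.sum_univ_eq_sum_range (fun i => m i) (d-1)]
    rfl
  have hmem := cub_mem μ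
  rw [hsum] at hmem
  have hcub_le : cubicity (TCC μ) ≤ ∑ i ∈ Finset.range (d - 1), m i := Nat.sInf_le hmem
  have hne : {k | ∃ I : Fin k → SimpleGraph (∀ i, Fin (μ i + 1)),
      (∀ i, IsUnitIntervalGraph (I i)) ∧
      ∀ u v, (TCC μ).Adj u v ↔ (u ≠ v ∧ ∀ i, (I i).Adj u v)}.Nonempty := ⟨_, hmem⟩
  have hmin := Nat.sInf_mem hne
  obtain ⟨I, hI1, hI2⟩ := hmin
  have hbox : boxicity (TCC μ) ≤ cubicity (TCC μ) :=
    Nat.sInf_le ⟨I, fun i => unit_isInterval (hI1 i), hI2⟩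
  exact ⟨hbox, hcub_le⟩
end

section
/- For natural numbers m₁ ≤ m₂, the boxicity and cubicity of TCC(m₁, m₂) satisfy cub(TCC(m₁,m₂)) ≥ box(TCC(m₁,m₂)) ≥ m₁; combined with the upper bound, box(TCC(m₁,m₂)) = cub(TCC(m₁,m₂)) = m₁. -/
def vrt (m₁ m₂ : ℕ) (p : Fin (m₁+1)) (q : Fin (m₂+1)) : ∀ i : Fin 2, Fin (![m₁, m₂] i + 1) :=
  Fin.cons p (Fin.cons q finZeroElim)

lemma TCC2_adj_iff (m₁ m₂ : ℕ) (x y : ∀ i : Fin 2, Fin (![m₁, m₂] i + 1)) :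
    (TCC ![m₁, m₂]).Adj x y ↔ x ≠ y ∧
      (((x 0 : ℕ) ≤ (y 0 : ℕ) ∧ (x 1 : ℕ) ≤ (y 1 : ℕ)) ∨
       ((y 0 : ℕ) ≤ (x 0 : ℕ) ∧ (y 1 : ℕ) ≤ (x 1 : ℕ))) := by
  change (x ≠ y ∧ ((∀ i, (x i : ℕ) ≤ y i) ∨ ∀ i, (y i : ℕ) ≤ x i)) ↔ _
  rw [Fin.forall_fin_two, Fin.forall_fin_two]

lemma interval_no_C4 {V : Type*} {I : SimpleGraph V} (hI : IsIntervalGraph I)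
    {w x y z : V}
    (hwx : I.Adj w x) (hxy : I.Adj x y) (hyz : I.Adj y z) (hzw : I.Adj z w)
    (hwy : ¬ I.Adj w y) (hxz : ¬ I.Adj x z) (hwy' : w ≠ y) (hxz' : x ≠ z) :
    False := by
  obtain ⟨a, b, hab⟩ := hI
  have key : ∀ u v, I.Adj u v ↔ u ≠ v ∧ (max (a u) (a v) ≤ min (b u) (b v)) := by
    intro u v
    rw [hab, Set.Icc_inter_Icc, Set.nonempty_Icc]
  have h1 := ((key w x).mp hwx).2
  have h2 := ((key x y).mp hxy).2
  have h3 := ((key y z).mp hyz).2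
  have h4 := ((key z w).mp hzw).2
  simp only [max_le_iff, le_min_iff] at h1 h2 h3 h4
  have hA : min (b w) (b y) < max (a w) (a y) := by
    by_contra hc
    exact hwy ((key w y).mpr ⟨hwy', not_lt.mp hc⟩)
  have hB : min (b x) (b z) < max (a x) (a z) := by
    by_contra hc
    exact hxz ((key x z).mpr ⟨hxz', not_lt.mp hc⟩)
  obtain ⟨⟨h1a, h1b⟩, h1c, h1d⟩ := h1
  obtain ⟨⟨h2a, h2b⟩, h2c, h2d⟩ := h2
  obtain ⟨⟨h3a, h3b⟩, h3c, h3d⟩ := h3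
  obtain ⟨⟨h4a, h4b⟩, h4c, h4d⟩ := h4
  rcases min_lt_iff.mp hA with hA'|hA' <;> rcases lt_max_iff.mp hA' with hA''|hA'' <;>
    rcases min_lt_iff.mp hB with hB'|hB' <;> rcases lt_max_iff.mp hB' with hB''|hB'' <;>
    linarith

lemma TCC_lower (m₁ m₂ : ℕ) (h : m₁ ≤ m₂) (n : ℕ)
    (I : Fin n → SimpleGraph (∀ i : Fin 2, Fin (![m₁, m₂] i + 1)))
    (hint : ∀ i, IsIntervalGraph (I i))
    (hiff : ∀ u v, (TCC ![m₁, m₂]).Adj u v ↔ (u ≠ v ∧ ∀ i, (I i).Adj u v)) :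
    m₁ ≤ n := by
  by_contra hlt
  push_neg at hlt
  set U : Fin m₁ → (∀ i : Fin 2, Fin (![m₁, m₂] i + 1)) := fun k =>
    vrt m₁ m₂ ⟨(k:ℕ)+1, Nat.succ_lt_succ k.isLt⟩
      ⟨(k:ℕ), Nat.lt_of_lt_of_le k.isLt (Nat.le_succ_of_le h)⟩ with hU
  set W : Fin m₁ → (∀ i : Fin 2, Fin (![m₁, m₂] i + 1)) := fun k =>
    vrt m₁ m₂ ⟨(k:ℕ), Nat.lt_succ_of_lt k.isLt⟩
      ⟨(k:ℕ)+1, Nat.succ_lt_succ (Nat.lt_of_lt_of_le k.isLt h)⟩ with hW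
  have hUWne : ∀ k, U k ≠ W k := by
    intro k hEq
    have h0 : ((U k 0 : ℕ)) = ((W k 0 : ℕ)) := congrArg Fin.val (congrFun hEq 0)
    have h0' : (k:ℕ)+1 = (k:ℕ) := h0
    omega
  have hUWnadj : ∀ k, ¬ (TCC ![m₁, m₂]).Adj (U k) (W k) := by
    intro k hadj
    rw [TCC2_adj_iff] at hadj
    rcases hadj.2 with ⟨h1, -⟩ | ⟨-, h2⟩
    · have h1' : (k:ℕ)+1 ≤ (k:ℕ) := h1
      omega
    · have h2' : (k:ℕ)+1 ≤ (k:ℕ) := h2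
      omega
  have hval : ∀ k l : Fin m₁, k ≠ l → (k:ℕ) ≠ (l:ℕ) := by
    intro k l hkl hv
    exact hkl (Fin.ext hv)
  have hadjUU : ∀ k l : Fin m₁, k ≠ l → (TCC ![m₁, m₂]).Adj (U k) (U l) := by
    intro k l hkl
    rw [TCC2_adj_iff]
    have hv := hval k l hkl
    constructor
    · intro hEq
      have h0 : ((U k 0 : ℕ)) = ((U l 0 : ℕ)) := congrArg Fin.val (congrFun hEq 0)
      have h0' : (k:ℕ)+1 = (l:ℕ)+1 := h0
      omega
    · show ((k:ℕ)+1 ≤ (l:ℕ)+1 ∧ (k:ℕ) ≤ (l:ℕ)) ∨ ((l:ℕ)+1 ≤ (k:ℕ)+1 ∧ (l:ℕ) ≤ (k:ℕ))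
      omega
  have hadjWW : ∀ k l : Fin m₁, k ≠ l → (TCC ![m₁, m₂]).Adj (W k) (W l) := by
    intro k l hkl
    rw [TCC2_adj_iff]
    have hv := hval k l hkl
    constructor
    · intro hEq
      have h0 : ((W k 0 : ℕ)) = ((W l 0 : ℕ)) := congrArg Fin.val (congrFun hEq 0)
      have h0' : (k:ℕ) = (l:ℕ) := h0
      omega
    · show ((k:ℕ) ≤ (l:ℕ) ∧ (k:ℕ)+1 ≤ (l:ℕ)+1) ∨ ((l:ℕ) ≤ (k:ℕ) ∧ (l:ℕ)+1 ≤ (k:ℕ)+1)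
      omega
  have hadjUW : ∀ k l : Fin m₁, k ≠ l → (TCC ![m₁, m₂]).Adj (U k) (W l) := by
    intro k l hkl
    rw [TCC2_adj_iff]
    have hv := hval k l hkl
    constructor
    · intro hEq
      have h0 : ((U k 0 : ℕ)) = ((W l 0 : ℕ)) := congrArg Fin.val (congrFun hEq 0)
      have h0' : (k:ℕ)+1 = (l:ℕ) := h0
      have h1 : ((U k 1 : ℕ)) = ((W l 1 : ℕ)) := congrArg Fin.val (congrFun hEq 1)
      have h1' : (k:ℕ) = (l:ℕ)+1 := h1
      omega
    · show ((k:ℕ)+1 ≤ (l:ℕ) ∧ (k:ℕ) ≤ (l:ℕ)+1) ∨ ((l:ℕ) ≤ (k:ℕ)+1 ∧ (l:ℕ)+1 ≤ (k:ℕ))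
      omega
  have hex : ∀ k, ∃ i, ¬ (I i).Adj (U k) (W k) := by
    intro k
    by_contra hc
    push_neg at hc
    exact hUWnadj k ((hiff _ _).mpr ⟨hUWne k, hc⟩)
  choose f hf using hex
  obtain ⟨k, l, hkl, hfkl⟩ := Fintype.exists_ne_map_eq_of_card_lt f (by simpa using hlt)
  have hedge : ∀ u v, (TCC ![m₁, m₂]).Adj u v → (I (f k)).Adj u v :=
    fun u v hadj => ((hiff u v).mp hadj).2 _
  exact interval_no_C4 (hint (f k))
    (hedge _ _ (hadjUU k l hkl))
    (hedge _ _ (hadjUW l k hkl.symm))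
    (hedge _ _ (hadjWW k l hkl))
    (hedge _ _ ((hadjUW k l hkl).symm))
    (hf k) (by rw [hfkl]; exact hf l) (hUWne k) (hUWne l)

lemma key_abs (m₂ i p p' q q' : ℕ) (hq : q ≤ m₂) (hq' : q' ≤ m₂)
    (hcmp : (p ≤ p' ∧ q ≤ q') ∨ (p' ≤ p ∧ q' ≤ q)) :
    |((1:ℝ)/(m₂+1) * q + (if p ≤ i then 1 - ((1:ℝ)/(m₂+1))/2 else 0)) -
     ((1:ℝ)/(m₂+1) * q' + (if p' ≤ i then 1 - ((1:ℝ)/(m₂+1))/2 else 0))| ≤ 1 := by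
  set t : ℝ := 1/(m₂+1) with ht
  have ht0 : 0 < t := by positivity
  have htm : t * ((m₂:ℝ) + 1) = 1 := by
    rw [ht]; field_simp
  have htm' : t * (m₂:ℝ) = 1 - t := by nlinarith
  have hq1 : t * (q:ℝ) ≤ t * m₂ := mul_le_mul_of_nonneg_left (by exact_mod_cast hq) ht0.le
  have hq2 : t * (q':ℝ) ≤ t * m₂ := mul_le_mul_of_nonneg_left (by exact_mod_cast hq') ht0.le
  have hq3 : (0:ℝ) ≤ t * q := by positivity
  have hq4 : (0:ℝ) ≤ t * q' := by positivity
  rcases hcmp with ⟨hp, hqle⟩ | ⟨hp, hqle⟩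
  · have hqq : t * (q:ℝ) ≤ t * q' := mul_le_mul_of_nonneg_left (by exact_mod_cast hqle) ht0.le
    rw [abs_le]
    split_ifs with hip hip' hip'
    · constructor <;> linarith
    · constructor <;> linarith
    · exact absurd (le_trans hp hip') hip
    · constructor <;> linarith
  · have hqq : t * (q':ℝ) ≤ t * q := mul_le_mul_of_nonneg_left (by exact_mod_cast hqle) ht0.le
    rw [abs_le]
    split_ifs with hip hip' hip'
    · constructor <;> linarith
    · exact absurd (le_trans hp hip) hip'
    · constructor <;> linarith
    · constructor <;> linarith

lemma key_abs2 (m₂ i p p' q q' : ℕ)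
    (hp : p ≤ i) (hp' : ¬ p' ≤ i) (hqq : q' < q) :
    1 < |((1:ℝ)/(m₂+1) * q + (if p ≤ i then 1 - ((1:ℝ)/(m₂+1))/2 else 0)) -
     ((1:ℝ)/(m₂+1) * q' + (if p' ≤ i then 1 - ((1:ℝ)/(m₂+1))/2 else 0))| := by
  rw [if_pos hp, if_neg hp']
  set t : ℝ := 1/(m₂+1) with ht
  have ht0 : 0 < t := by positivity
  have hd : t * q' + t ≤ t * q := by
    have h1 : (q':ℝ) + 1 ≤ q := by exact_mod_cast hqq
    nlinarith
  have hkey : 1 + t/2 ≤ (t * q + (1 - t/2)) - (t * q' + 0) := by linarith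
  calc (1:ℝ) < 1 + t/2 := by linarith
    _ ≤ _ := le_trans hkey (le_abs_self _)

noncomputable def aFun (m₁ m₂ : ℕ) (i : Fin m₁) (x : ∀ i : Fin 2, Fin (![m₁, m₂] i + 1)) : ℝ :=
  (1:ℝ)/(m₂+1) * ((x 1 : ℕ) : ℝ) + (if (x 0 : ℕ) ≤ (i:ℕ) then 1 - ((1:ℝ)/(m₂+1))/2 else 0)

lemma val0_le (m₁ m₂ : ℕ) (x : ∀ i : Fin 2, Fin (![m₁, m₂] i + 1)) : (x 0 : ℕ) ≤ m₁ :=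
  Nat.lt_succ_iff.mp (x 0).isLt

lemma val1_le (m₁ m₂ : ℕ) (x : ∀ i : Fin 2, Fin (![m₁, m₂] i + 1)) : (x 1 : ℕ) ≤ m₂ :=
  Nat.lt_succ_iff.mp (x 1).isLt

lemma unit_icc_nonempty_iff (x y : ℝ) :
    (Set.Icc x (x+1) ∩ Set.Icc y (y+1)).Nonempty ↔ |x - y| ≤ 1 := by
  rw [Set.Icc_inter_Icc, Set.nonempty_Icc, abs_sub_le_iff]
  simp only [max_le_iff, le_min_iff]
  constructor
  · rintro ⟨⟨-, h1⟩, h2, -⟩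
    exact ⟨by linarith, by linarith⟩
  · rintro ⟨h1, h2⟩
    exact ⟨⟨by linarith, by linarith⟩, by linarith, by linarith⟩

lemma TCC_upper (m₁ m₂ : ℕ) :
    ∃ I : Fin m₁ → SimpleGraph (∀ i : Fin 2, Fin (![m₁, m₂] i + 1)),
      (∀ i, IsUnitIntervalGraph (I i)) ∧
      ∀ u v, (TCC ![m₁, m₂]).Adj u v ↔ (u ≠ v ∧ ∀ i, (I i).Adj u v) := by
  refine ⟨fun i =>
    { Adj := fun u v => u ≠ v ∧ |aFun m₁ m₂ i u - aFun m₁ m₂ i v| ≤ 1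
      symm := ⟨by rintro u v ⟨h1, h2⟩; exact ⟨h1.symm, by rwa [abs_sub_comm]⟩⟩
      loopless := ⟨fun u hu => hu.1 rfl⟩ },
    fun i => ⟨aFun m₁ m₂ i, fun u v => by rw [unit_icc_nonempty_iff]⟩,
    fun u v => ?_⟩
  rw [TCC2_adj_iff]
  constructor
  · rintro ⟨hne, hcmp⟩
    exact ⟨hne, fun i => ⟨hne,
      key_abs m₂ i (u 0) (v 0) (u 1) (v 1) (val1_le m₁ m₂ u) (val1_le m₁ m₂ v) hcmp⟩⟩
  · rintro ⟨hne, hall⟩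
    refine ⟨hne, ?_⟩
    by_contra hcmp
    have hcase : ((u 0:ℕ) < (v 0:ℕ) ∧ (v 1:ℕ) < (u 1:ℕ)) ∨
        ((v 0:ℕ) < (u 0:ℕ) ∧ (u 1:ℕ) < (v 1:ℕ)) := by omega
    rcases hcase with ⟨h0, h1⟩ | ⟨h0, h1⟩
    · have hi : (u 0:ℕ) < m₁ := lt_of_lt_of_le h0 (val0_le m₁ m₂ v)
      have hle : |aFun m₁ m₂ ⟨(u 0:ℕ), hi⟩ u - aFun m₁ m₂ ⟨(u 0:ℕ), hi⟩ v| ≤ 1 :=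
        (hall ⟨(u 0:ℕ), hi⟩).2
      have := key_abs2 m₂ (u 0) (u 0) (v 0) (u 1) (v 1) le_rfl (by omega) h1
      exact absurd hle (not_le.mpr this)
    · have hi : (v 0:ℕ) < m₁ := lt_of_lt_of_le h0 (val0_le m₁ m₂ u)
      have hle : |aFun m₁ m₂ ⟨(v 0:ℕ), hi⟩ u - aFun m₁ m₂ ⟨(v 0:ℕ), hi⟩ v| ≤ 1 :=
        (hall ⟨(v 0:ℕ), hi⟩).2
      rw [abs_sub_comm] at hle
      have := key_abs2 m₂ (v 0) (v 0) (u 0) (v 1) (u 1) le_rfl (by omega) h1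
      exact absurd hle (not_le.mpr this)

theorem boxicity_cubicity_TCC_two (m₁ m₂ : ℕ) (h : m₁ ≤ m₂) :
    m₁ ≤ boxicity (TCC ![m₁, m₂]) ∧
    boxicity (TCC ![m₁, m₂]) ≤ cubicity (TCC ![m₁, m₂]) ∧
    boxicity (TCC ![m₁, m₂]) = m₁ ∧ cubicity (TCC ![m₁, m₂]) = m₁ := by
  have hmemC : m₁ ∈ {k | ∃ I : Fin k → SimpleGraph (∀ i : Fin 2, Fin (![m₁, m₂] i + 1)),
      (∀ i, IsUnitIntervalGraph (I i)) ∧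
      ∀ u v, (TCC ![m₁, m₂]).Adj u v ↔ (u ≠ v ∧ ∀ i, (I i).Adj u v)} := TCC_upper m₁ m₂
  have hsub : {k | ∃ I : Fin k → SimpleGraph (∀ i : Fin 2, Fin (![m₁, m₂] i + 1)),
      (∀ i, IsUnitIntervalGraph (I i)) ∧
      ∀ u v, (TCC ![m₁, m₂]).Adj u v ↔ (u ≠ v ∧ ∀ i, (I i).Adj u v)} ⊆
      {k | ∃ I : Fin k → SimpleGraph (∀ i : Fin 2, Fin (![m₁, m₂] i + 1)),
      (∀ i, IsIntervalGraph (I i)) ∧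
      ∀ u v, (TCC ![m₁, m₂]).Adj u v ↔ (u ≠ v ∧ ∀ i, (I i).Adj u v)} := by
    rintro n ⟨J, hJ, hJiff⟩
    refine ⟨J, fun i => ?_, hJiff⟩
    obtain ⟨aa, haa⟩ := hJ i
    exact ⟨aa, fun x => aa x + 1, haa⟩
  have hmemB := hsub hmemC
  have hlow : ∀ n ∈ {k | ∃ I : Fin k → SimpleGraph (∀ i : Fin 2, Fin (![m₁, m₂] i + 1)),
      (∀ i, IsIntervalGraph (I i)) ∧
      ∀ u v, (TCC ![m₁, m₂]).Adj u v ↔ (u ≠ v ∧ ∀ i, (I i).Adj u v)}, m₁ ≤ n := by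
    rintro n ⟨J, hJ, hJiff⟩
    exact TCC_lower m₁ m₂ h n J hJ hJiff
  have hbox_le : boxicity (TCC ![m₁, m₂]) ≤ m₁ := Nat.sInf_le hmemB
  have hcub_le : cubicity (TCC ![m₁, m₂]) ≤ m₁ := Nat.sInf_le hmemC
  have hle_box : m₁ ≤ boxicity (TCC ![m₁, m₂]) := hlow _ (Nat.sInf_mem ⟨m₁, hmemB⟩)
  have hboxcub : boxicity (TCC ![m₁, m₂]) ≤ cubicity (TCC ![m₁, m₂]) :=
    Nat.sInf_le (hsub (Nat.sInf_mem ⟨m₁, hmemC⟩))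
  exact ⟨hle_box, hboxcub, le_antisymm hbox_le hle_box,
    le_antisymm hcub_le (le_trans hle_box hboxcub)⟩
end
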